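/- Let S ⊆ S' be saturated multiplicatively closed subsets of R. Suppose M is semi-S-factorable and S ∩ Z(M) = ∅, and let P be one of the following properties: being présimplifiable, having unique factorization, having finite factorization, being half factorial, having bounded factorization. If M has P with respect to S', then M has P with respect to S (e.g., if M is an S'-UFM then M is an S-UFM, and similarly for the other properties). -/

import Mathlib

namespace FactorizationPaper

variable {R : Type*} [CommRing R]

/-- `S` is a saturated multiplicatively closed subset of `R`:
it contains `1`, is closed under multiplication, and `x*y ∈ S` implies `x ∈ S` and `y ∈ S`. -/
def Saturated (S : Set R) : Prop :=
  1 ∈ S ∧ (∀ x ∈ S, ∀ y ∈ S, x * y ∈ S) ∧ ∀ x y : R, x * y ∈ S → x ∈ S ∧ y ∈ S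

/-- The submonoid of `R` associated to a saturated multiplicatively closed set. -/
def Saturated.submonoid {S : Set R} (hS : Saturated S) : Submonoid R where
  carrier := S
  one_mem' := hS.1
  mul_mem' := fun {a b} ha hb => hS.2.1 a ha b hb

section ElementDefs

variable (S : Set R) {N : Type*} [AddCommGroup N] [Module R N]

/-- `m ∼^S n` : `m` and `n` are S-associates. -/
def SAssoc (m n : N) : Prop := (∃ s ∈ S, m = s • n) ∧ (∃ s ∈ S, n = s • m)

/-- `m ≈^S n` : `m` and `n` are S-strong associates. -/
def SStrongAssoc (m n : N) : Prop := ∃ u : R, IsUnit u ∧ u ∈ S ∧ m = u • n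

/-- `m ≅^S n` : `m` and `n` are S-very strong associates. -/
def SVeryStrongAssoc (m n : N) : Prop :=
  SAssoc S m n ∧ ((m = 0 ∧ n = 0) ∨ ∀ s ∈ S, m = s • n → IsUnit s)

/-- `m` is S-primitive. -/
def SPrimitive (m : N) : Prop := ∀ s ∈ S, ∀ n : N, m = s • n → SAssoc S n m

/-- `m` is S-strongly primitive. -/
def SStronglyPrimitive (m : N) : Prop := ∀ s ∈ S, ∀ n : N, m = s • n → SStrongAssoc S n m

/-- `m` is S-very strongly primitive. -/
def SVeryStronglyPrimitive (m : N) : Prop := ∀ s ∈ S, ∀ n : N, m = s • n → SVeryStrongAssoc S n m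

/-- the three kinds of S-primitivity, indexed by `Fin 3` :
`0` = primitive, `1` = strongly primitive, `2` = very strongly primitive. -/
def PrimOf (k : Fin 3) (m : N) : Prop :=
  match k with
  | 0 => SPrimitive S m
  | 1 => SStronglyPrimitive S m
  | 2 => SVeryStronglyPrimitive S m

/-- `m = s • n` is a compact S-atomic factorization of `m`. -/
def IsCompactFactorization (m : N) (s : R) (n : N) : Prop :=
  s ∈ S ∧ SPrimitive S n ∧ m = s • n

/-- `m = s₁ ⋯ s_k • n` (with the `sᵢ` the members of the list `l`, nonunits in `S`)
is an S-factorization of `m`, of length `l.length`. -/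
def IsSFactorization (m : N) (l : List R) (n : N) : Prop :=
  (∀ s ∈ l, s ∈ S ∧ ¬ IsUnit s) ∧ m = l.prod • n

end ElementDefs

/-- `a ∼ b` : associates in `R` (i.e. S-associates with `S = R`, in `R` as an `R`-module). -/
def Assoc (a b : R) : Prop := SAssoc (Set.univ : Set R) a b

/-- `a ≈ b` : strong associates in `R`. -/
def StrongAssoc (a b : R) : Prop := SStrongAssoc (Set.univ : Set R) a b

/-- `a ≅ b` : very strong associates in `R`. -/
def VeryStrongAssoc (a b : R) : Prop := SVeryStrongAssoc (Set.univ : Set R) a b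

/-- `a` is irreducible. -/
def Irred (a : R) : Prop := ¬ IsUnit a ∧ ∀ b c : R, a = b * c → Assoc a b ∨ Assoc a c

/-- `a` is strongly irreducible. -/
def StrongIrred (a : R) : Prop :=
  ¬ IsUnit a ∧ ∀ b c : R, a = b * c → StrongAssoc a b ∨ StrongAssoc a c

/-- `a` is very strongly irreducible. -/
def VeryStrongIrred (a : R) : Prop :=
  ¬ IsUnit a ∧ ∀ b c : R, a = b * c → VeryStrongAssoc a b ∨ VeryStrongAssoc a c

/-- the three kinds of irreducibility, indexed by `Fin 3` :
`0` = irreducible, `1` = strongly irreducible, `2` = very strongly irreducible. -/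
def IrredOf (k : Fin 3) (a : R) : Prop :=
  match k with
  | 0 => Irred a
  | 1 => StrongIrred a
  | 2 => VeryStrongIrred a

section ElementDefs2

variable (S : Set R) {N : Type*} [AddCommGroup N] [Module R N]

/-- `m = s₁ ⋯ s_k • n` is an S-atomic factorization
(each `sᵢ` irreducible and in `S`, `n` S-primitive). -/
def IsSAtomicFactorization (m : N) (l : List R) (n : N) : Prop :=
  IsSFactorization S m l n ∧ (∀ s ∈ l, Irred s) ∧ SPrimitive S n

/-- an (α, β)-S-factorization: each `sᵢ` is α (a kind of irreducible)
and `n` is S-β (a kind of S-primitive). -/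
def IsABFactorization (kα kβ : Fin 3) (m : N) (l : List R) (n : N) : Prop :=
  IsSFactorization S m l n ∧ (∀ s ∈ l, IrredOf kα s) ∧ PrimOf S kβ n

/-- Isomorphism of S-atomic factorizations: same length, S-associate primitive parts,
and the irreducible parts match up to permutation and associates. -/
def FactorIso (l : List R) (n : N) (l' : List R) (n' : N) : Prop :=
  l.length = l'.length ∧ SAssoc S n n' ∧
    ∃ l'' : List R, l'.Perm l'' ∧ List.Forall₂ Assoc l l''

end ElementDefs2

section SetDefs

variable (S : Set R) {N : Type*} [AddCommGroup N] [Module R N]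

/-- `E ⊆ N` is compactly S-atomic. -/
def CompactlySAtomic (E : Set N) : Prop :=
  ∀ m ∈ E, m ≠ 0 → ∃ s n, IsCompactFactorization S m s n

/-- `E ⊆ N` is semi-S-factorable. -/
def SemiSFactorable (E : Set N) : Prop :=
  CompactlySAtomic S E ∧ ∀ m ∈ E, m ≠ 0 → ∀ s n s' n',
    IsCompactFactorization S m s n → IsCompactFactorization S m s' n' → Assoc s s'

/-- `E ⊆ N` is S-factorable. -/
def SFactorable (E : Set N) : Prop :=
  SemiSFactorable S E ∧ ∀ m ∈ E, m ≠ 0 → ∀ s n s' n',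
    IsCompactFactorization S m s n → IsCompactFactorization S m s' n' → SAssoc S n n'

/-- `S` splits `E ⊆ N`. -/
def Splits (E : Set N) : Prop :=
  SemiSFactorable S E ∧
    ∀ r : R, SPrimitive S r → ∀ m : N, SPrimitive S m →
      r • m ≠ 0 → r • m ∈ E → SPrimitive S (r • m)

end SetDefs

/-- The set of zero divisors of the module `M` in `R`. -/
def ZDiv (R : Type*) [CommRing R] (M : Type*) [AddCommGroup M] [Module R M] : Set R :=
  {r : R | ∃ m : M, m ≠ 0 ∧ r • m = 0}

/-- The annihilator of `M` in `R`, as a set. -/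
def AnnSet (R : Type*) [CommRing R] (M : Type*) [AddCommGroup M] [Module R M] : Set R :=
  {r : R | ∀ m : M, r • m = 0}

/-- The annihilator of `M` in `R`, as an ideal. -/
def AnnIdeal (R : Type*) [CommRing R] (M : Type*) [AddCommGroup M] [Module R M] : Ideal R where
  carrier := AnnSet R M
  zero_mem' := fun m => zero_smul R m
  add_mem' := fun {a b} ha hb m => by
    rw [add_smul, ha m, hb m, add_zero]
  smul_mem' := fun c x hx m => by
    rw [smul_eq_mul, mul_smul, hx m, smul_zero]

section ModuleProps

variable (S : Set R) (N : Type*) [AddCommGroup N] [Module R N]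

/-- `N` is S-présimplifiable. -/
def SPresimplifiable : Prop := ∀ s ∈ S, ∀ m : N, s • m = m → IsUnit s ∨ m = 0

/-- `N` is S-atomic. -/
def SAtomicModule : Prop := ∀ m : N, m ≠ 0 → ∃ l n, IsSAtomicFactorization S m l n

/-- `N` is (α, β)-S-atomic. -/
def ABAtomicModule (kα kβ : Fin 3) : Prop :=
  ∀ m : N, m ≠ 0 → ∃ l n, IsABFactorization S kα kβ m l n

/-- `N` is an S-UFM. -/
def SUFM : Prop := SAtomicModule S N ∧ ∀ m : N, m ≠ 0 → ∀ l n l' n',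
  IsSAtomicFactorization S m l n → IsSAtomicFactorization S m l' n' → FactorIso S l n l' n'

/-- `N` is an S-FFM. -/
def SFFM : Prop := SAtomicModule S N ∧ ∀ m : N, m ≠ 0 →
  ∃ Fs : Set (List R × N), Fs.Finite ∧
    ∀ l n, IsSAtomicFactorization S m l n → ∃ p ∈ Fs, FactorIso S l n p.1 p.2

/-- `N` is an S-BFM. -/
def SBFM : Prop := ∀ m : N, m ≠ 0 → ∃ B : ℕ,
  ∀ l n, IsSFactorization S m l n → l.length ≤ B

/-- `N` is an S-HFM. -/
def SHFM : Prop := SAtomicModule S N ∧ ∀ m : N, m ≠ 0 → ∀ l n l' n',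
  IsSAtomicFactorization S m l n → IsSAtomicFactorization S m l' n' → l.length = l'.length

end ModuleProps

section InE

variable (E : Set R)

/-- `R` is présimplifiable in `E`. -/
def PresimpIn : Prop := ∀ a ∈ E, a ≠ 0 → ¬ IsUnit a → ∀ r : R, a = r * a → IsUnit r ∨ a = 0

/-- `R` is atomic in `E`. -/
def AtomicIn : Prop := ∀ a ∈ E, a ≠ 0 → ¬ IsUnit a →
  ∃ l n, IsSAtomicFactorization (Set.univ : Set R) a l n

/-- `R` has unique factorization in `E`. -/
def UFIn : Prop := AtomicIn E ∧ ∀ a ∈ E, a ≠ 0 → ¬ IsUnit a → ∀ l n l' n',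
  IsSAtomicFactorization (Set.univ : Set R) a l n →
  IsSAtomicFactorization (Set.univ : Set R) a l' n' →
  FactorIso (Set.univ : Set R) l n l' n'

/-- `R` has finite factorization in `E`. -/
def FFIn : Prop := AtomicIn E ∧ ∀ a ∈ E, a ≠ 0 → ¬ IsUnit a →
  ∃ Fs : Set (List R × R), Fs.Finite ∧ ∀ l n,
    IsSAtomicFactorization (Set.univ : Set R) a l n →
      ∃ p ∈ Fs, FactorIso (Set.univ : Set R) l n p.1 p.2

/-- `R` is half factorial in `E`. -/
def HFIn : Prop := AtomicIn E ∧ ∀ a ∈ E, a ≠ 0 → ¬ IsUnit a → ∀ l n l' n',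
  IsSAtomicFactorization (Set.univ : Set R) a l n →
  IsSAtomicFactorization (Set.univ : Set R) a l' n' → l.length = l'.length

/-- `R` has bounded factorization in `E`. -/
def BFIn : Prop := ∀ a ∈ E, a ≠ 0 → ¬ IsUnit a →
  ∃ B : ℕ, ∀ l n, IsSFactorization (Set.univ : Set R) a l n → l.length ≤ B

end InE

/-- The set `T = S⁻¹S'` in the localization `R_S`. -/
def locT {S : Set R} (hS : Saturated S) (S' : Set R) : Set (Localization hS.submonoid) :=
  {x | ∃ s' ∈ S', ∃ t : hS.submonoid, x = Localization.mk s' t}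

section DomainDefs

variable (D : Type*) [CommRing D]

/-- two lists of ring elements agree up to order and associates. -/
def ListAssociated (l l' : List D) : Prop :=
  ∃ l'' : List D, l'.Perm l'' ∧ List.Forall₂ Associated l l''

/-- `D` is atomic: every nonzero nonunit is a finite product of irreducibles. -/
def DomAtomic : Prop := ∀ x : D, x ≠ 0 → ¬ IsUnit x →
  ∃ l : List D, (∀ a ∈ l, Irreducible a) ∧ x = l.prod

/-- `D` is a bounded factorization domain. -/
def DomBFD : Prop := ∀ x : D, x ≠ 0 → ¬ IsUnit x →
  ∃ B : ℕ, ∀ l : List D, (∀ a ∈ l, ¬ IsUnit a) → x = l.prod → l.length ≤ B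

/-- `D` is a half factorial domain. -/
def DomHFD : Prop := DomAtomic D ∧ ∀ x : D, x ≠ 0 → ¬ IsUnit x →
  ∀ l l' : List D, (∀ a ∈ l, Irreducible a) → x = l.prod →
    (∀ a ∈ l', Irreducible a) → x = l'.prod → l.length = l'.length

/-- `D` is a finite factorization domain. -/
def DomFFD : Prop := DomAtomic D ∧ ∀ x : D, x ≠ 0 → ¬ IsUnit x →
  ∃ Fs : Set (List D), Fs.Finite ∧ ∀ l : List D, (∀ a ∈ l, Irreducible a) → x = l.prod →
    ∃ l' ∈ Fs, ListAssociated D l l'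

/-- `D` is a unique factorization domain. -/
def DomUFD : Prop := DomAtomic D ∧ ∀ x : D, x ≠ 0 → ¬ IsUnit x →
  ∀ l l' : List D, (∀ a ∈ l, Irreducible a) → x = l.prod →
    (∀ a ∈ l', Irreducible a) → x = l'.prod → ListAssociated D l l'

end DomainDefs

section AXBXdefs

variable (B : Type*) [CommRing B] (A : Subring B)

/-- The ring `R = A + X·B[X]`, as a subring of `B[X]`. -/
def AXBX : Subring (Polynomial B) where
  carrier := {f | f.coeff 0 ∈ A}
  zero_mem' := by simp only [Set.mem_setOf_eq, Polynomial.coeff_zero]; exact zero_mem A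
  one_mem' := by
    simp only [Set.mem_setOf_eq, Polynomial.coeff_one, if_pos rfl]
    exact one_mem A
  add_mem' := fun {f g} hf hg => by
    simp only [Set.mem_setOf_eq, Polynomial.coeff_add] at *
    exact add_mem hf hg
  neg_mem' := fun {f} hf => by
    simp only [Set.mem_setOf_eq, Polynomial.coeff_neg] at *
    exact neg_mem hf
  mul_mem' := fun {f g} hf hg => by
    simp only [Set.mem_setOf_eq, Polynomial.mul_coeff_zero] at *
    exact mul_mem hf hg

/-- The saturated multiplicatively closed subset `S = (U(B) ∩ A) ∪ {u·Xⁿ : u ∈ U(B), n ≥ 1}`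
of `R = A + X·B[X]`. -/
def Sset : Set (AXBX B A) :=
  {f | (∃ u : B, IsUnit u ∧ u ∈ A ∧ (f : Polynomial B) = Polynomial.C u) ∨
       (∃ u : B, IsUnit u ∧ ∃ n : ℕ, 1 ≤ n ∧
          (f : Polynomial B) = Polynomial.C u * Polynomial.X ^ n)}

/-- The saturated multiplicatively closed subset `S₀ = U(B) ∩ A` of `A`. -/
def S0set : Set A := {a : A | IsUnit (a : B)}

end AXBXdefs

/-!
Elements of `S` are `M`-regular, so in a semi-`S`-factorable module every nonzero `m = s • n`
has an `S`-primitive part `n` that is unique up to a unit of `S`. Appending one fixed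
`S'`-atomic factorization of that part to any `S`-atomic factorization of `m` gives an
`S'`-atomic factorization of `m`; this transports uniqueness, finiteness and equal lengths from
`S'` to `S`, once the associate classes of the appended factors are cancelled. `S`-atomicity
comes from bounding the lengths of `S`-factorizations by those of `S'`-atomic ones: a nonunit of
`S` can never be absorbed into an `S'`-primitive element.
-/

theorem exists_perm_forall₂_of_map_eq {α β : Type*} {f : α → β} :
    ∀ {l l' : List α}, (l.map f : Multiset β) = l'.map f →
      ∃ l'', l'.Perm l'' ∧ List.Forall₂ (fun a b => f a = f b) l l''
  | [], l', h => by
    obtain rfl : l' = [] := List.map_eq_nil_iff.1 ((Multiset.coe_eq_zero _).1 h.symm)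
    exact ⟨[], List.Perm.refl _, List.Forall₂.nil⟩
  | a :: t, l', h => by
    classical
    obtain ⟨b, hb, hba⟩ : ∃ b ∈ l', f b = f a := by
      have : f a ∈ (l'.map f : Multiset β) := h ▸ by simp
      simpa using this
    have hperm : l'.Perm (b :: l'.erase b) := List.perm_cons_erase hb
    have ht : (t.map f : Multiset β) = (l'.erase b).map f := by
      rw [Multiset.coe_eq_coe.2 (hperm.map f)] at h
      simpa [hba] using h
    obtain ⟨t', ht', hft'⟩ := exists_perm_forall₂_of_map_eq ht
    exact ⟨b :: t', hperm.trans (ht'.cons b), List.Forall₂.cons hba.symm hft'⟩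

theorem exists_finite_cover_of_finite_image {X Y : Type*} [Nonempty X] {A : Set X} {f : X → Y}
    {r : X → X → Prop} (hr : ∀ x ∈ A, ∀ y ∈ A, f x = f y → r x y) (hfin : (f '' A).Finite) :
    ∃ F : Set X, F.Finite ∧ ∀ x ∈ A, ∃ y ∈ F, r x y := by
  refine ⟨Function.invFunOn f A '' (f '' A), hfin.image _, fun x hx => ?_⟩
  obtain ⟨hyA, hy⟩ := Function.invFunOn_pos ⟨x, hx, rfl⟩
  exact ⟨_, Set.mem_image_of_mem _ (Set.mem_image_of_mem f hx), hr x hx _ hyA hy.symm⟩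

section Ring

variable {R : Type*} [CommRing R]

theorem assoc_iff_dvd {a b : R} : Assoc a b ↔ b ∣ a ∧ a ∣ b := by
  simp only [Assoc, SAssoc, Set.mem_univ, true_and, smul_eq_mul, Dvd.dvd, mul_comm]

theorem Assoc.symm {a b : R} (h : Assoc a b) : Assoc b a := ⟨h.2, h.1⟩

theorem Saturated.mem_of_dvd {S : Set R} (hS : Saturated S) {a b : R} (hab : a ∣ b)
    (hb : b ∈ S) : a ∈ S := by
  obtain ⟨c, rfl⟩ := hab
  exact (hS.2.2 a c hb).1

theorem Saturated.mem_of_isUnit {S : Set R} (hS : Saturated S) {a : R} (ha : IsUnit a) : a ∈ S :=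
  hS.mem_of_dvd ha.dvd hS.1

theorem assoc_mul_left_of_isUnit {b c : R} (hb : IsUnit b) : Assoc (b * c) c :=
  assoc_iff_dvd.2 ⟨dvd_mul_left c b, hb.mul_left_dvd.2 dvd_rfl⟩

theorem exists_isUnit_mul_prod_irred_of_bounded {s : R} (B : ℕ)
    (hB : ∀ l : List R, (∀ a ∈ l, ¬ IsUnit a) → l.prod ∣ s → l.length ≤ B) :
    ∃ (e : R) (L : List R), IsUnit e ∧ (∀ a ∈ L, Irred a) ∧ s = e * L.prod := by
  induction B generalizing s with
  | zero =>
    refine ⟨s, [], ?_, by simp, by simp⟩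
    by_contra hs
    simpa using hB [s] (by simpa using hs) (by simp)
  | succ B ih =>
    by_cases hs : IsUnit s
    · exact ⟨s, [], hs, by simp, by simp⟩
    by_cases hirr : Irred s
    · exact ⟨1, [s], isUnit_one, by simpa using hirr, by simp⟩
    obtain ⟨b, c, rfl, hb, hc⟩ : ∃ b c, s = b * c ∧ ¬ Assoc s b ∧ ¬ Assoc s c := by
      simpa [Irred, hs, not_or] using hirr
    have hbu : ¬ IsUnit b := fun h => hc (assoc_mul_left_of_isUnit h)
    have hcu : ¬ IsUnit c := fun h => hb (mul_comm c b ▸ assoc_mul_left_of_isUnit h)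
    obtain ⟨eb, Lb, heb, hLb, hbeq⟩ := ih (s := b) fun l hl hdvd => Nat.le_of_succ_le_succ <| by
      simpa using hB (c :: l) (List.forall_mem_cons.2 ⟨hcu, hl⟩)
        (by simpa [mul_comm b c] using mul_dvd_mul_left c hdvd)
    obtain ⟨ec, Lc, hec, hLc, hceq⟩ := ih (s := c) fun l hl hdvd => Nat.le_of_succ_le_succ <| by
      simpa using hB (b :: l) (List.forall_mem_cons.2 ⟨hbu, hl⟩) (mul_dvd_mul_left b hdvd)
    refine ⟨eb * ec, Lb ++ Lc, heb.mul hec, fun a ha => ?_, ?_⟩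
    · exact (List.mem_append.1 ha).elim (hLb a) (hLc a)
    · rw [hbeq, hceq, List.prod_append]
      ring

variable (R) in
/-- The paper's associates (mutual divisibility), which in rings with zero divisors is coarser
than Mathlib's `Associated`. -/
def assocSetoid : Setoid R where
  r := Assoc
  iseqv :=
    { refl := fun a => assoc_iff_dvd.2 ⟨dvd_rfl, dvd_rfl⟩
      symm := Assoc.symm
      trans := fun hab hbc => by
        rw [assoc_iff_dvd] at *
        exact ⟨hbc.1.trans hab.1, hab.2.trans hbc.2⟩ }

def assocClasses (l : List R) : Multiset (Quotient (assocSetoid R)) :=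
  Multiset.map (Quotient.mk _) l

theorem assocClasses_append (l l' : List R) :
    assocClasses (l ++ l') = assocClasses l + assocClasses l' := by
  simp [assocClasses]

theorem card_assocClasses (l : List R) : (assocClasses l).card = l.length := by
  simp [assocClasses]

theorem factorIso_iff {S : Set R} {N : Type*} [AddCommGroup N]
    [Module R N] {l l' : List R} {n n' : N} :
    FactorIso S l n l' n' ↔ SAssoc S n n' ∧ assocClasses l = assocClasses l' := by
  have hmap : ∀ l l' : List R, List.Forall₂ Assoc l l' ↔
      l.map (Quotient.mk (assocSetoid R)) = l'.map (Quotient.mk _) := fun l l' => by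
    rw [← List.forall₂_eq_eq_eq, List.forall₂_map_left_iff, List.forall₂_map_right_iff]
    exact ⟨(·.imp fun _ _ h => Quotient.sound h), (·.imp fun _ _ h => Quotient.exact h)⟩
  constructor
  · rintro ⟨-, hn, l'', hperm, hfa⟩
    refine ⟨hn, ?_⟩
    simp only [assocClasses, Multiset.map_coe, (hmap l l'').1 hfa]
    exact Multiset.coe_eq_coe.2 (hperm.map _).symm
  · rintro ⟨hn, hcl⟩
    refine ⟨by simpa only [card_assocClasses] using congrArg Multiset.card hcl, hn, ?_⟩
    simp only [assocClasses, Multiset.map_coe] at hcl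
    obtain ⟨l'', hperm, hfa⟩ := exists_perm_forall₂_of_map_eq hcl
    exact ⟨l'', hperm, hfa.imp fun _ _ h => Quotient.exact h⟩

end Ring

section Module

variable {R : Type*} [CommRing R] {M : Type*} [AddCommGroup M] [Module R M] {S S' : Set R}

theorem smul_left_cancel_of_mem (hZ : S ∩ ZDiv R M = ∅) {s : R} (hs : s ∈ S) {x y : M}
    (h : s • x = s • y) : x = y := by
  by_contra hxy
  have : s ∈ S ∩ ZDiv R M := ⟨hs, x - y, sub_ne_zero.2 hxy, by rw [smul_sub, h, sub_self]⟩
  simp [hZ] at this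

theorem smul_ne_zero_of_mem (hZ : S ∩ ZDiv R M = ∅) {s : R} (hs : s ∈ S) {x : M} (hx : x ≠ 0) :
    s • x ≠ 0 :=
  fun h => hx (smul_left_cancel_of_mem hZ hs (h.trans (smul_zero s).symm))

theorem SAssoc.trans (hS : Saturated S) {m n p : M} (h₁ : SAssoc S m n) (h₂ : SAssoc S n p) :
    SAssoc S m p := by
  obtain ⟨⟨s₁, hs₁, e₁⟩, t₁, ht₁, f₁⟩ := h₁
  obtain ⟨⟨s₂, hs₂, e₂⟩, t₂, ht₂, f₂⟩ := h₂
  exact ⟨⟨s₁ * s₂, hS.2.1 _ hs₁ _ hs₂, by rw [e₁, e₂, mul_smul]⟩,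
    t₂ * t₁, hS.2.1 _ ht₂ _ ht₁, by rw [f₂, f₁, mul_smul]⟩

theorem SPrimitive.unit_smul (hS : Saturated S) {n : M} {u : R} (hn : SPrimitive S n)
    (hu : u ∈ S) (hunit : IsUnit u) : SPrimitive S (u • n) := by
  obtain ⟨v, hv⟩ := hunit.exists_left_inv
  have hvS : v ∈ S := hS.mem_of_isUnit (IsUnit.of_mul_eq_one u hv)
  have hn_eq : n = v • u • n := by rw [smul_smul, hv, one_smul]
  intro s hs z hz
  exact (hn (v * s) (hS.2.1 v hvS s hs) z (by rw [hn_eq, hz, smul_smul])).trans hS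
    ⟨⟨v, hvS, hn_eq⟩, u, hu, rfl⟩

theorem isUnit_of_sPrimitive_eq_smul (hS : Saturated S)
    (hM : SemiSFactorable S (Set.univ : Set M)) {n z : M} {v : R} (hn : SPrimitive S n)
    (hn0 : n ≠ 0) (hv : v ∈ S) (h : n = v • z) : IsUnit v := by
  obtain ⟨d, p, hd, hp, rfl⟩ := hM.1 z (Set.mem_univ z) (right_ne_zero_of_smul (h ▸ hn0))
  have hassoc := hM.2 n (Set.mem_univ n) hn0 1 n (v * d) p ⟨hS.1, hn, (one_smul R n).symm⟩
    ⟨hS.2.1 v hv d hd, hp, by rw [h, mul_smul]⟩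
  exact isUnit_of_mul_isUnit_left (isUnit_of_dvd_one (assoc_iff_dvd.1 hassoc).1)

theorem exists_isUnit_smul_of_isCompactFactorization (hS : Saturated S)
    (hM : SemiSFactorable S (Set.univ : Set M)) (hZ : S ∩ ZDiv R M = ∅) {m n n' : M} {s s' : R}
    (hm : m ≠ 0) (h : IsCompactFactorization S m s n) (h' : IsCompactFactorization S m s' n') :
    ∃ u ∈ S, IsUnit u ∧ n' = u • n := by
  obtain ⟨⟨r, hr⟩, -⟩ := assoc_iff_dvd.1 (hM.2 m (Set.mem_univ m) hm s n s' n' h h')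
  have hrS : r ∈ S := hS.mem_of_dvd (Dvd.intro_left s' hr.symm) h.1
  have hn' : n' = r • n :=
    smul_left_cancel_of_mem hZ h'.1 (by rw [← h'.2.2, smul_smul, ← hr, ← h.2.2])
  exact ⟨r, hrS, isUnit_of_sPrimitive_eq_smul hS hM h'.2.1
    (right_ne_zero_of_smul (h'.2.2 ▸ hm)) hrS hn', hn'⟩

theorem IsSFactorization.mono (hSS' : S ⊆ S') {m n : M} {l : List R}
    (h : IsSFactorization S m l n) : IsSFactorization S' m l n :=
  ⟨fun s hs => ⟨hSS' (h.1 s hs).1, (h.1 s hs).2⟩, h.2⟩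

theorem IsSFactorization.append {m n n' : M} {l l' : List R} (h : IsSFactorization S m l n)
    (hl : ∀ s ∈ l, Irred s) (h' : IsSAtomicFactorization S n l' n') :
    IsSAtomicFactorization S m (l ++ l') n' :=
  ⟨⟨fun s hs => (List.mem_append.1 hs).elim (h.1 s) (h'.1.1 s), by
      rw [h.2, h'.1.2, List.prod_append, mul_smul]⟩,
    fun s hs => (List.mem_append.1 hs).elim (hl s) (h'.2.1 s), h'.2.2⟩

theorem IsSAtomicFactorization.unit_smul (hS : Saturated S) {n ρ : M} {l : List R} {u : R}
    (h : IsSAtomicFactorization S n l ρ) (hu : u ∈ S) (hunit : IsUnit u) :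
    IsSAtomicFactorization S (u • n) l (u • ρ) :=
  ⟨⟨h.1.1, by rw [h.1.2, smul_comm]⟩, h.2.1, h.2.2.unit_smul hS hu hunit⟩

theorem IsSAtomicFactorization.isCompactFactorization (hS : Saturated S) {m n : M} {l : List R}
    (h : IsSAtomicFactorization S m l n) : IsCompactFactorization S m l.prod n :=
  ⟨hS.submonoid.list_prod_mem fun a ha => (h.1.1 a ha).1, h.2.2, h.1.2⟩

theorem IsSAtomicFactorization.sAssoc (hS : Saturated S)
    (hM : SemiSFactorable S (Set.univ : Set M)) (hZ : S ∩ ZDiv R M = ∅) {m n n' : M}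
    {l l' : List R} (hm : m ≠ 0) (h : IsSAtomicFactorization S m l n)
    (h' : IsSAtomicFactorization S m l' n') : SAssoc S n n' := by
  obtain ⟨u, hu, hunit, rfl⟩ := exists_isUnit_smul_of_isCompactFactorization hS hM hZ hm
    (h.isCompactFactorization hS) (h'.isCompactFactorization hS)
  obtain ⟨v, hv⟩ := hunit.exists_left_inv
  exact ⟨⟨v, hS.mem_of_isUnit (IsUnit.of_mul_eq_one u hv), by rw [smul_smul, hv, one_smul]⟩,
    u, hu, rfl⟩

theorem isUnit_of_sPrimitive_smul (hS : Saturated S) (hSS' : S ⊆ S')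
    (hM : SemiSFactorable S (Set.univ : Set M)) (hZ : S ∩ ZDiv R M = ∅) {a : R} {ρ : M}
    (ha : a ∈ S) (hρ : ρ ≠ 0) (hp : SPrimitive S' (a • ρ)) : IsUnit a := by
  obtain ⟨⟨w, -, hw⟩, -⟩ := hp a (hSS' ha) ρ rfl
  obtain ⟨g, π, hg, hπ, rfl⟩ := hM.1 ρ (Set.mem_univ ρ) hρ
  refine isUnit_of_sPrimitive_eq_smul hS hM hπ (right_ne_zero_of_smul hρ) ha
    (z := w • π) (smul_left_cancel_of_mem hZ hg ?_)
  rw [hw, smul_smul, smul_smul, smul_smul, smul_smul]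
  congr 1
  ring

end Module

section Transfer

variable {R : Type*} [CommRing R] {M : Type*} [AddCommGroup M] [Module R M] {S S' : Set R}

theorem exists_sAtomicFactorization_length_ge (hS : Saturated S) (hSS' : S ⊆ S')
    (hM : SemiSFactorable S (Set.univ : Set M)) (hZ : S ∩ ZDiv R M = ∅)
    (hA' : SAtomicModule S' M) {l : List R} :
    ∀ {m z : M}, m ≠ 0 → IsSFactorization S m l z →
      ∃ T ρ, IsSAtomicFactorization S' m T ρ ∧ l.length ≤ T.length := by
  induction l with
  | nil =>
    intro m z hm _
    obtain ⟨T, ρ, hT⟩ := hA' m hm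
    exact ⟨T, ρ, hT, Nat.zero_le _⟩
  | cons a t ih =>
    intro m z hm hf
    have ha := List.forall_mem_cons.1 hf.1
    have hm_eq : m = a • t.prod • z := by rw [hf.2, List.prod_cons, mul_smul]
    have hm₁ : t.prod • z ≠ 0 := right_ne_zero_of_smul (hm_eq ▸ hm)
    obtain ⟨T, ρ, hT, hlen⟩ := ih hm₁ ⟨ha.2, rfl⟩
    have hρ : ρ ≠ 0 := right_ne_zero_of_smul (hT.1.2 ▸ hm₁)
    obtain ⟨W, τ, hW⟩ := hA' (a • ρ) (smul_ne_zero_of_mem hZ ha.1.1 hρ)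
    have hW_ne : W ≠ [] := by
      rintro rfl
      refine ha.1.2 (isUnit_of_sPrimitive_smul hS hSS' hM hZ ha.1.1 hρ ?_)
      simpa [hW.1.2] using hW.2.2
    refine ⟨T ++ W, τ, IsSFactorization.append ⟨hT.1.1, ?_⟩ hT.2.1 hW, ?_⟩
    · rw [hm_eq, hT.1.2, smul_comm]
    · have := List.length_pos_of_ne_nil hW_ne
      simp only [List.length_cons, List.length_append]
      omega

theorem sAtomicModule_of_bounded (hS : Saturated S) (hM : SemiSFactorable S (Set.univ : Set M))
    (hb : ∀ m : M, m ≠ 0 → ∃ B, ∀ l z, IsSFactorization S m l z → l.length ≤ B) :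
    SAtomicModule S M := by
  intro m hm
  obtain ⟨s, n, hs, hn, rfl⟩ := hM.1 m (Set.mem_univ m) hm
  obtain ⟨B, hB⟩ := hb _ hm
  have hdvd_mem : ∀ {a}, a ∣ s → a ∈ S := fun h => hS.mem_of_dvd h hs
  obtain ⟨e, L, he, hL, rfl⟩ := exists_isUnit_mul_prod_irred_of_bounded B
    fun l hl ⟨r, hr⟩ => hB l (r • n)
      ⟨fun a ha => ⟨hdvd_mem ((List.dvd_prod ha).trans ⟨r, hr⟩), hl a ha⟩, by rw [hr, mul_smul]⟩
  refine ⟨L, e • n, ⟨fun a ha => ⟨hdvd_mem ?_, (hL a ha).1⟩, by rw [mul_comm, mul_smul]⟩, hL,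
    hn.unit_smul hS (hdvd_mem (dvd_mul_right e _)) he⟩
  exact (List.dvd_prod ha).trans (dvd_mul_left _ e)

theorem sAtomicModule_of_bounded_sAtomic (hS : Saturated S) (hSS' : S ⊆ S')
    (hM : SemiSFactorable S (Set.univ : Set M)) (hZ : S ∩ ZDiv R M = ∅)
    (hA' : SAtomicModule S' M)
    (hb : ∀ m : M, m ≠ 0 → ∃ B, ∀ T ρ, IsSAtomicFactorization S' m T ρ → T.length ≤ B) :
    SAtomicModule S M :=
  sAtomicModule_of_bounded hS hM fun m hm => (hb m hm).imp fun _ hB _ _ h =>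
    let ⟨T, ρ, hT, hlen⟩ := exists_sAtomicFactorization_length_ge hS hSS' hM hZ hA' hm h
    hlen.trans (hB T ρ hT)

theorem exists_append_sAtomicFactorization (hS : Saturated S) (hS' : Saturated S')
    (hSS' : S ⊆ S') (hM : SemiSFactorable S (Set.univ : Set M)) (hZ : S ∩ ZDiv R M = ∅)
    (hA' : SAtomicModule S' M) {m : M} (hm : m ≠ 0) :
    ∃ V : List R, ∀ l n, IsSAtomicFactorization S m l n →
      ∃ ρ, IsSAtomicFactorization S' m (l ++ V) ρ := by
  obtain ⟨s₀, n₀, hc⟩ := hM.1 m (Set.mem_univ m) hm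
  obtain ⟨V, ρ, hV⟩ := hA' n₀ (right_ne_zero_of_smul (hc.2.2 ▸ hm))
  refine ⟨V, fun l n h => ?_⟩
  obtain ⟨u, hu, hunit, rfl⟩ := exists_isUnit_smul_of_isCompactFactorization hS hM hZ hm hc
    (h.isCompactFactorization hS)
  exact ⟨u • ρ, (h.1.mono hSS').append h.2.1 (hV.unit_smul hS' (hSS' hu) hunit)⟩

theorem sPresimplifiable_of_semiSFactorable (hS : Saturated S)
    (hM : SemiSFactorable S (Set.univ : Set M)) (hZ : S ∩ ZDiv R M = ∅) :
    SPresimplifiable S M := by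
  intro s hs m hsm
  by_cases hm : m = 0
  · exact Or.inr hm
  obtain ⟨s₀, n₀, hs₀, hn₀, rfl⟩ := hM.1 m (Set.mem_univ m) hm
  have : n₀ = s • n₀ := smul_left_cancel_of_mem hZ hs₀ (by rw [smul_comm, hsm])
  exact Or.inl (isUnit_of_sPrimitive_eq_smul hS hM hn₀ (right_ne_zero_of_smul hm) hs this)

theorem sBFM_of_subset (hSS' : S ⊆ S') (h : SBFM S' M) : SBFM S M :=
  fun m hm => (h m hm).imp fun _ hB l n hf => hB l n (hf.mono hSS')

theorem SUFM.sHFM (h : SUFM S M) : SHFM S M :=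
  ⟨h.1, fun m hm l n l' n' h₁ h₂ => (h.2 m hm l n l' n' h₁ h₂).1⟩

theorem sHFM_of_subset (hS : Saturated S) (hS' : Saturated S') (hSS' : S ⊆ S')
    (hM : SemiSFactorable S (Set.univ : Set M)) (hZ : S ∩ ZDiv R M = ∅) (h : SHFM S' M) :
    SHFM S M := by
  obtain ⟨hA', hlen⟩ := h
  refine ⟨sAtomicModule_of_bounded_sAtomic hS hSS' hM hZ hA' fun m hm => ?_,
    fun m hm l n l' n' h₁ h₂ => ?_⟩
  · obtain ⟨T₀, ρ₀, h₀⟩ := hA' m hm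
    exact ⟨T₀.length, fun T ρ hT => (hlen m hm T ρ T₀ ρ₀ hT h₀).le⟩
  · obtain ⟨V, hV⟩ := exists_append_sAtomicFactorization hS hS' hSS' hM hZ hA' hm
    obtain ⟨ρ, hρ⟩ := hV l n h₁
    obtain ⟨ρ', hρ'⟩ := hV l' n' h₂
    simpa using hlen m hm _ _ _ _ hρ hρ'

theorem sUFM_of_subset (hS : Saturated S) (hS' : Saturated S') (hSS' : S ⊆ S')
    (hM : SemiSFactorable S (Set.univ : Set M)) (hZ : S ∩ ZDiv R M = ∅) (h : SUFM S' M) :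
    SUFM S M := by
  refine ⟨(sHFM_of_subset hS hS' hSS' hM hZ h.sHFM).1, fun m hm l n l' n' h₁ h₂ => ?_⟩
  obtain ⟨V, hV⟩ := exists_append_sAtomicFactorization hS hS' hSS' hM hZ h.1 hm
  obtain ⟨ρ, hρ⟩ := hV l n h₁
  obtain ⟨ρ', hρ'⟩ := hV l' n' h₂
  have hcl := (factorIso_iff.1 (h.2 m hm _ _ _ _ hρ hρ')).2
  rw [assocClasses_append, assocClasses_append] at hcl
  exact factorIso_iff.2 ⟨h₁.sAssoc hS hM hZ hm h₂, add_right_cancel hcl⟩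

theorem sFFM_of_subset (hS : Saturated S) (hS' : Saturated S') (hSS' : S ⊆ S')
    (hM : SemiSFactorable S (Set.univ : Set M)) (hZ : S ∩ ZDiv R M = ∅) (h : SFFM S' M) :
    SFFM S M := by
  obtain ⟨hA', hfin⟩ := h
  refine ⟨sAtomicModule_of_bounded_sAtomic hS hSS' hM hZ hA' fun m hm => ?_, fun m hm => ?_⟩
  · obtain ⟨Fs, hFs, hcov⟩ := hfin m hm
    obtain ⟨B, hB⟩ := (hFs.image fun p => p.1.length).bddAbove
    refine ⟨B, fun T ρ hT => ?_⟩
    obtain ⟨p, hp, hiso⟩ := hcov T ρ hT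
    exact hiso.1 ▸ hB ⟨p, hp, rfl⟩
  obtain ⟨V, hV⟩ := exists_append_sAtomicFactorization hS hS' hSS' hM hZ hA' hm
  obtain ⟨Fs, hFs, hcov⟩ := hfin m hm
  let A : Set (List R × M) := {p | IsSAtomicFactorization S m p.1 p.2}
  have hclasses : (fun p => assocClasses p.1) '' A ⊆
      (· + assocClasses V) ⁻¹' ((fun q => assocClasses q.1) '' Fs) := by
    rintro _ ⟨⟨l, n⟩, h, rfl⟩
    obtain ⟨ρ, hρ⟩ := hV l n h
    obtain ⟨q, hq, hiso⟩ := hcov _ _ hρ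
    exact ⟨q, hq, (factorIso_iff.1 hiso).2.symm.trans (assocClasses_append l V)⟩
  obtain ⟨F, hF, hcover⟩ := exists_finite_cover_of_finite_image (A := A)
    (fun p hp q hq hpq => factorIso_iff.2 ⟨hp.sAssoc hS hM hZ hm hq, hpq⟩)
    (((hFs.image _).preimage fun _ _ _ _ => add_right_cancel).subset hclasses)
  exact ⟨F, hF, fun l n h => hcover (l, n) h⟩

end Transfer

theorem statement12_general {R : Type*} [CommRing R] {M : Type*} [AddCommGroup M] [Module R M]
    (S S' : Set R) (hS : Saturated S) (hS' : Saturated S') (hSS' : S ⊆ S')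
    (hM : SemiSFactorable S (Set.univ : Set M)) (hZ : S ∩ ZDiv R M = ∅) :
    (SPresimplifiable S' M → SPresimplifiable S M) ∧
    (SUFM S' M → SUFM S M) ∧
    (SFFM S' M → SFFM S M) ∧
    (SHFM S' M → SHFM S M) ∧
    (SBFM S' M → SBFM S M) :=
  ⟨fun _ => sPresimplifiable_of_semiSFactorable hS hM hZ,
    sUFM_of_subset hS hS' hSS' hM hZ,
    sFFM_of_subset hS hS' hSS' hM hZ,
    sHFM_of_subset hS hS' hSS' hM hZ,
    sBFM_of_subset hSS'⟩

theorem statement12 {R : Type*} [CommRing R] {M : Type*} [AddCommGroup M] [Module R M]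
    [Nontrivial M] (S S' : Set R) (hS : Saturated S) (hS' : Saturated S') (hSS' : S ⊆ S')
    (hM : SemiSFactorable S (Set.univ : Set M)) (hZ : S ∩ ZDiv R M = ∅) :
    (SPresimplifiable S' M → SPresimplifiable S M) ∧
    (SUFM S' M → SUFM S M) ∧
    (SFFM S' M → SFFM S M) ∧
    (SHFM S' M → SHFM S M) ∧
    (SBFM S' M → SBFM S M) :=
  statement12_general S S' hS hS' hSS' hM hZ

end FactorizationPaper
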